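/- If μ is a free Q-measure on ℕ and ν is a measure with ν ≤_RB μ, then μ ≤_RB ν. -/

import Mathlib

open Filter

/-- A finitely additive probability measure defined on all subsets of `ℕ`. -/
def IsMeasure (μ : Set ℕ → ℝ) : Prop :=
  (∀ A : Set ℕ, 0 ≤ μ A ∧ μ A ≤ 1) ∧ μ Set.univ = 1 ∧
    ∀ A B : Set ℕ, Disjoint A B → μ (A ∪ B) = μ A + μ B

/-- A measure is free if it vanishes on finite sets. -/
def IsFree (μ : Set ℕ → ℝ) : Prop := ∀ A : Set ℕ, A.Finite → μ A = 0

/-- A function is finite-to-one if all fibers are finite. -/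
def FinToOne (f : ℕ → ℕ) : Prop := ∀ n : ℕ, (f ⁻¹' {n}).Finite

/-- Rudin-Blass reducibility: `ν ≤_RB μ` via a finite-to-one map. -/
def RBLe (ν μ : Set ℕ → ℝ) : Prop :=
  ∃ f : ℕ → ℕ, FinToOne f ∧ ∀ A : Set ℕ, μ (f ⁻¹' A) = ν A

/-- Rudin-Keisler reducibility: `ν ≤_RK μ`. -/
def RKLe (ν μ : Set ℕ → ℝ) : Prop :=
  ∃ f : ℕ → ℕ, ∀ A : Set ℕ, μ (f ⁻¹' A) = ν A

/-- A measure is shift invariant if `μ(A + 1) = μ(A)`. -/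
def ShiftInvariant (μ : Set ℕ → ℝ) : Prop :=
  ∀ A : Set ℕ, μ ((fun n => n + 1) '' A) = μ A

/-- A measure extends the asymptotic density. -/
def ExtendsDensity (μ : Set ℕ → ℝ) : Prop :=
  ∀ (A : Set ℕ) (d : ℝ),
    Tendsto (fun n : ℕ => ((A ∩ Set.Iio n).ncard : ℝ) / n) atTop (nhds d) → μ A = d

/-- A partition of `ℕ` indexed by `ℕ`. -/
def IsPartition (A : ℕ → Set ℕ) : Prop :=
  Pairwise (Function.onFun Disjoint A) ∧ (⋃ n, A n) = Set.univ

/-- A selector of a partition: meets each piece in at most one point. -/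
def IsSelector (S : Set ℕ) (A : ℕ → Set ℕ) : Prop :=
  ∀ n : ℕ, (S ∩ A n).Subsingleton

/-- A Q-measure: each partition into finite sets has a selector of full measure. -/
def IsQMeasure (μ : Set ℕ → ℝ) : Prop :=
  ∀ A : ℕ → Set ℕ, IsPartition A → (∀ n, (A n).Finite) →
    ∃ S : Set ℕ, IsSelector S A ∧ μ S = 1

/-- A Q⁺-measure: each partition into finite sets has a selector of positive measure. -/
def IsQPlusMeasure (μ : Set ℕ → ℝ) : Prop :=
  ∀ A : ℕ → Set ℕ, IsPartition A → (∀ n, (A n).Finite) →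
    ∃ S : Set ℕ, IsSelector S A ∧ 0 < μ S

/-- A P-measure: each partition has a pseudo-selector of the largest possible measure. -/
def IsPMeasure (μ : Set ℕ → ℝ) : Prop :=
  ∀ A : ℕ → Set ℕ, IsPartition A →
    ∃ S : Set ℕ, (∀ n, (S ∩ A n).Finite) ∧ μ S = 1 - ∑' n, μ (A n)

/-- A selective measure: each partition has a selector of the largest possible measure. -/
def IsSelectiveMeasure (μ : Set ℕ → ℝ) : Prop :=
  ∀ A : ℕ → Set ℕ, IsPartition A →
    ∃ S : Set ℕ, IsSelector S A ∧ μ S = 1 - ∑' n, μ (A n)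

/-- A non-atomic measure: finite partitions into pieces of arbitrarily small measure. -/
def NonAtomic (μ : Set ℕ → ℝ) : Prop :=
  ∀ ε : ℝ, 0 < ε → ∃ (N : ℕ) (P : Fin N → Set ℕ),
    Pairwise (Function.onFun Disjoint P) ∧ (⋃ i, P i) = Set.univ ∧ ∀ i, μ (P i) < ε

/-- The continuum hypothesis: `2 ^ ℵ₀ = ℵ₁`. -/
def CH : Prop := (2 : Cardinal.{0}) ^ Cardinal.aleph0.{0} = Cardinal.aleph.{0} 1

/-!
The fibres of a finite-to-one `f` with `f[μ] = ν` partition `ℕ` into finite sets, so the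
Q-property yields a set `S` of full `μ`-measure on which `f` is injective. A left inverse `g`
of `f` on `S` (extended by the identity off `f '' S`) is again finite-to-one, and
`f ⁻¹' (g ⁻¹' A)` agrees with `A` on `S`, whence `g[ν] = μ`.
-/

open Function

namespace IsMeasure

variable {μ : Set ℕ → ℝ}

theorem mono (hμ : IsMeasure μ) {A B : Set ℕ} (hAB : A ⊆ B) : μ A ≤ μ B := by
  have h := hμ.2.2 A (B \ A) disjoint_sdiff_self_right
  rw [Set.union_sdiff_cancel hAB] at h
  linarith [(hμ.1 (B \ A)).1]

theorem measure_compl_eq_zero {S : Set ℕ} (hμ : IsMeasure μ) (hS : μ S = 1) : μ Sᶜ = 0 := by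
  have h := hμ.2.2 S Sᶜ disjoint_compl_right
  rw [Set.union_compl_self, hμ.2.1] at h
  linarith

theorem measure_inter_eq {S : Set ℕ} (hμ : IsMeasure μ) (hS : μ S = 1) (B : Set ℕ) :
    μ (B ∩ S) = μ B := by
  have hnull : μ (B ∩ Sᶜ) = 0 :=
    le_antisymm (hμ.measure_compl_eq_zero hS ▸ hμ.mono Set.inter_subset_right) (hμ.1 _).1
  have h := hμ.2.2 (B ∩ S) (B ∩ Sᶜ)
    (disjoint_compl_right.mono Set.inter_subset_right Set.inter_subset_right)
  rw [Set.inter_union_compl] at h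
  linarith

theorem measure_eq_of_inter_eq {S A B : Set ℕ} (hμ : IsMeasure μ) (hS : μ S = 1)
    (hAB : A ∩ S = B ∩ S) : μ A = μ B := by
  rw [← hμ.measure_inter_eq hS A, hAB, hμ.measure_inter_eq hS B]

end IsMeasure

theorem isPartition_fibers (f : ℕ → ℕ) : IsPartition fun n => f ⁻¹' {n} :=
  ⟨fun _ _ hmn => Set.disjoint_left.mpr fun _ hx hx' => hmn (hx.symm.trans hx'),
    Set.eq_univ_of_forall fun x => Set.mem_iUnion.mpr ⟨f x, rfl⟩⟩

theorem IsSelector.injOn_of_fibers {S : Set ℕ} {f : ℕ → ℕ}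
    (hS : IsSelector S fun n => f ⁻¹' {n}) : S.InjOn f :=
  fun x hx _ hy hxy => hS (f x) ⟨hx, rfl⟩ ⟨hy, hxy.symm⟩

open Classical in
noncomputable def invFunOnElseId (f : ℕ → ℕ) (S : Set ℕ) : ℕ → ℕ :=
  (f '' S).piecewise (invFunOn f S) id

theorem invFunOnElseId_apply_of_mem {f : ℕ → ℕ} {S : Set ℕ} (hinj : S.InjOn f) {x : ℕ}
    (hx : x ∈ S) : invFunOnElseId f S (f x) = x := by
  classical
  rw [invFunOnElseId, Set.piecewise_eq_of_mem _ _ _ (Set.mem_image_of_mem f hx)]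
  exact hinj.leftInvOn_invFunOn hx

theorem finToOne_invFunOnElseId (f : ℕ → ℕ) (S : Set ℕ) : FinToOne (invFunOnElseId f S) := by
  classical
  intro m
  refine ((Set.finite_singleton m).insert (f m)).subset fun n hn => ?_
  simp only [Set.mem_preimage, Set.mem_singleton_iff, invFunOnElseId] at hn
  by_cases hnS : n ∈ f '' S
  · rw [Set.piecewise_eq_of_mem _ _ _ hnS] at hn
    exact Or.inl (hn ▸ (invFunOn_eq hnS).symm)
  · rw [Set.piecewise_eq_of_notMem _ _ _ hnS] at hn
    exact Or.inr hn

theorem rbLe_of_injOn {μ ν : Set ℕ → ℝ} {f : ℕ → ℕ} {S : Set ℕ} (hμ : IsMeasure μ)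
    (hS : μ S = 1) (hinj : S.InjOn f) (hpush : ∀ A, μ (f ⁻¹' A) = ν A) : RBLe μ ν := by
  refine ⟨invFunOnElseId f S, finToOne_invFunOnElseId f S, fun A => ?_⟩
  rw [← hpush _]
  refine hμ.measure_eq_of_inter_eq hS (Set.ext fun x => and_congr_left fun hx => ?_)
  simp only [Set.mem_preimage, invFunOnElseId_apply_of_mem hinj hx]

theorem stmt_3_general (μ ν : Set ℕ → ℝ) (hμ : IsMeasure μ)
    (hQ : IsQMeasure μ) (h : RBLe ν μ) : RBLe μ ν := by
  obtain ⟨f, hf, hpush⟩ := h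
  obtain ⟨S, hsel, hS⟩ := hQ _ (isPartition_fibers f) hf
  exact rbLe_of_injOn hμ hS hsel.injOn_of_fibers hpush

/-- Every free Q-measure is Rudin-Blass minimal. -/
theorem stmt_3 (μ ν : Set ℕ → ℝ) (hμ : IsMeasure μ) (hfree : IsFree μ)
    (hQ : IsQMeasure μ) (hν : IsMeasure ν) (h : RBLe ν μ) : RBLe μ ν :=
  stmt_3_general μ ν hμ hQ h
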